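/- arXiv:2003.09102 — 3 statements merged into one kernel-verified Lean document; each statement's English description precedes it below -/
import Mathlib

section
/- Let p ≥ 5 be a prime and m ≥ 1 an integer. The number of pairs (α,β) with α, β both units of ℤ/p^mℤ and 4α³ + 27β² = 0 in ℤ/p^mℤ equals p^{m−1}(p−1), i.e. p^m·(1 − 1/p). -/
theorem stmt_5 (p : ℕ) (hp : p.Prime) (h5 : 5 ≤ p) (m : ℕ) (hm : 1 ≤ m) :
    {ab : ZMod (p ^ m) × ZMod (p ^ m) |
        IsUnit ab.1 ∧ IsUnit ab.2 ∧ 4 * ab.1 ^ 3 + 27 * ab.2 ^ 2 = 0}.ncard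
      = p ^ (m - 1) * (p - 1) := by
  haveI : NeZero (p ^ m) := ⟨pow_ne_zero m hp.ne_zero⟩
  have hc2 : Nat.Coprime 2 (p ^ m) :=
    ((Nat.coprime_primes Nat.prime_two hp).2 (by omega)).pow_right m
  have hc3 : Nat.Coprime 3 (p ^ m) :=
    ((Nat.coprime_primes Nat.prime_three hp).2 (by omega)).pow_right m
  have h2 : IsUnit (2 : ZMod (p ^ m)) := by
    have := (ZMod.isUnit_iff_coprime 2 (p ^ m)).2 hc2
    simpa using this
  have h3 : IsUnit (3 : ZMod (p ^ m)) := by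
    have := (ZMod.isUnit_iff_coprime 3 (p ^ m)).2 hc3
    simpa using this
  have h2u := h2
  have h3u := h3
  obtain ⟨w2, hw2⟩ := h2
  obtain ⟨w3, hw3⟩ := h3
  set f : (ZMod (p ^ m))ˣ → ZMod (p ^ m) × ZMod (p ^ m) :=
    fun t => (-3 * (t : ZMod (p ^ m)) ^ 2, 2 * (t : ZMod (p ^ m)) ^ 3) with hf
  have hinj : Function.Injective f := by
    intro s t hst
    have h1 : (-3 : ZMod (p ^ m)) * (s : ZMod (p ^ m)) ^ 2 = -3 * (t : ZMod (p ^ m)) ^ 2 :=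
      congrArg Prod.fst hst
    have h2' : (2 : ZMod (p ^ m)) * (s : ZMod (p ^ m)) ^ 3 = 2 * (t : ZMod (p ^ m)) ^ 3 :=
      congrArg Prod.snd hst
    have hs2 : (s : ZMod (p ^ m)) ^ 2 = (t : ZMod (p ^ m)) ^ 2 :=
      h3u.neg.mul_left_cancel h1
    have hs3 : (s : ZMod (p ^ m)) ^ 3 = (t : ZMod (p ^ m)) ^ 3 :=
      h2u.mul_left_cancel h2'
    have hu2 : s ^ 2 = t ^ 2 := Units.ext (by push_cast; exact hs2)
    have hu3 : s ^ 3 = t ^ 3 := Units.ext (by push_cast; exact hs3)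
    have : s ^ 3 * (s ^ 2)⁻¹ = t ^ 3 * (t ^ 2)⁻¹ := by rw [hu2, hu3]
    simpa [pow_succ, mul_assoc] using this
  have hrange : {ab : ZMod (p ^ m) × ZMod (p ^ m) |
        IsUnit ab.1 ∧ IsUnit ab.2 ∧ 4 * ab.1 ^ 3 + 27 * ab.2 ^ 2 = 0} = Set.range f := by
    ext ⟨a, b⟩
    simp only [Set.mem_setOf_eq, Set.mem_range, hf, Prod.mk.injEq]
    constructor
    · rintro ⟨⟨u, hu⟩, ⟨v, hv⟩, heq⟩
      set c : (ZMod (p ^ m))ˣ := w2 * u with hc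
      have hcc : (c : ZMod (p ^ m)) = 2 * a := by rw [hc]; push_cast [hw2, hu]; ring
      set ci : ZMod (p ^ m) := ((c⁻¹ : (ZMod (p ^ m))ˣ) : ZMod (p ^ m)) with hcidef
      have hci' : (2 * a) * ci = 1 := by rw [← hcc]; exact c.mul_inv
      refine ⟨c⁻¹ * (-(w3 * v)), ?_, ?_⟩
      · have hT : ((c⁻¹ * (-(w3 * v)) : (ZMod (p ^ m))ˣ) : ZMod (p ^ m))
            = ci * (-(3 * b)) := by push_cast [hw3, hv, hcidef]; ring
        rw [hT]
        linear_combination (-ci ^ 2) * heq + a * (2 * a * ci + 1) * hci'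
      · have hT : ((c⁻¹ * (-(w3 * v)) : (ZMod (p ^ m))ˣ) : ZMod (p ^ m))
            = ci * (-(3 * b)) := by push_cast [hw3, hv, hcidef]; ring
        rw [hT]
        linear_combination (-2 * b * ci ^ 3) * heq
          + b * (4 * a ^ 2 * ci ^ 2 + 2 * a * ci + 1) * hci'
    · rintro ⟨t, ht1, ht2⟩
      refine ⟨?_, ?_, ?_⟩
      · rw [← ht1]
        exact h3u.neg.mul (t.isUnit.pow 2)
      · rw [← ht2]
        exact h2u.mul (t.isUnit.pow 3)
      · rw [← ht1, ← ht2]; ring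
  rw [hrange, ← Nat.card_coe_set_eq, Nat.card_range_of_injective hinj,
    Nat.card_eq_fintype_card, ZMod.card_units_eq_totient,
    Nat.totient_prime_pow hp (by omega)]
end

section
/- Let p ≥ 5 be a prime and m ≥ 1 an integer. The number of pairs of integers (A,B) with 0 ≤ A < p^{m+6}, 0 ≤ B < p^{m+6}, such that p² exactly divides A (p² ∣ A and p³ ∤ A), p³ exactly divides B (p³ ∣ B and p⁴ ∤ B), and the p-adic valuation of 4(A/p²)³ + 27(B/p³)² is exactly m, equals p^{m+5}(p−1)². (This condition depends only on (A,B) modulo p^{m+6}, and characterizes Kodaira–Néron type I_m* at p for the minimal model y² = x³+Ax+B.) -/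
/-!
Write `A = p²a`, `B = p³b`. The conditions on `(a, b)` only involve `p ∤ a`, `p ∤ b` and
`v_p(4a³ + 27b²) = m`, so they depend only on `(a, b)` mod `p^(m+1)`; as `a` ranges over
`p³` periods and `b` over `p²`, the count is `p⁵` times the number of good residue pairs.
Putting `b = t a` with `t` a unit, `4a³ + 27b² = a²(4a + 27t²)`, so the condition says that
`4a + 27t²` is `p^m` times a unit; for each of the `p^m (p - 1)` units `t` this leaves `p - 1`
values of `a`, each automatically a unit because `m ≥ 1` and `p ≠ 3`.
-/

open Finset

namespace IStarCount

section Periodic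

variable {N : ℕ} [NeZero N]

theorem card_filter_range_natCast_eq (K : ℕ) (x : ZMod N) :
    #{a ∈ range (K * N) | ((a : ℕ) : ZMod N) = x} = K := by
  have hmod : ∀ a : ℕ, (a : ZMod N) = x ↔ a ≡ x.val [MOD N] := fun a => by
    rw [← ZMod.natCast_eq_natCast_iff, ZMod.natCast_zmod_val]
  simp_rw [hmod, ← Nat.count_eq_card_filter_range, Nat.count_modEq_card _ (NeZero.pos N)]
  simp [NeZero.ne N]

theorem card_filter_product_natCast_mem (K L : ℕ) (P : Finset (ZMod N × ZMod N)) :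
    #{ab ∈ range (K * N) ×ˢ range (L * N) | ((ab.1 : ZMod N), (ab.2 : ZMod N)) ∈ P} =
      K * L * #P := by
  rw [card_eq_sum_card_fiberwise (f := fun ab : ℕ × ℕ => ((ab.1 : ZMod N), (ab.2 : ZMod N)))
    (s := {ab ∈ range (K * N) ×ˢ range (L * N) | ((ab.1 : ZMod N), (ab.2 : ZMod N)) ∈ P})
    (t := P) fun ab hab => (mem_filter.1 hab).2, sum_const_nat (m := K * L), mul_comm]
  intro z hz
  have hfiber :
      {ab ∈ {ab ∈ range (K * N) ×ˢ range (L * N) | ((ab.1 : ZMod N), (ab.2 : ZMod N)) ∈ P} |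
        ((ab.1 : ZMod N), (ab.2 : ZMod N)) = z} =
      {a ∈ range (K * N) | ((a : ℕ) : ZMod N) = z.1} ×ˢ
        {b ∈ range (L * N) | ((b : ℕ) : ZMod N) = z.2} := by
    ext ⟨a, b⟩
    simp only [mem_filter, mem_product, Prod.ext_iff]
    constructor
    · rintro ⟨⟨⟨ha, hb⟩, -⟩, h1, h2⟩; exact ⟨⟨ha, h1⟩, hb, h2⟩
    · rintro ⟨⟨ha, h1⟩, hb, h2⟩
      refine ⟨⟨⟨ha, hb⟩, ?_⟩, h1, h2⟩
      rwa [show ((a : ZMod N), (b : ZMod N)) = z from Prod.ext h1 h2]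
  rw [hfiber, card_product, card_filter_range_natCast_eq, card_filter_range_natCast_eq]

end Periodic

section LocalRing

variable {R : Type*} [CommRing R] [IsLocalRing R]

theorem isUnit_sub_of_not_isUnit {s u : R} (hs : ¬IsUnit s) (hu : IsUnit u) : IsUnit (s - u) := by
  have : IsUnit (s + (u - s)) := by rwa [add_sub_cancel]
  rcases IsLocalRing.isUnit_or_isUnit_of_isUnit_add this with h | h
  · exact absurd h hs
  · simpa using h.neg

-- With `y = t * x` the form becomes `x ^ 2 * (4 * x + 27 * t ^ 2)`, and for each unit `t` the
-- affine map `x ↦ 4 * x + 27 * t ^ 2` is a bijection; it lands in units because `T` has none.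
open scoped Classical in
theorem card_filter_isUnit_cubic_mem [Fintype R] [DecidableEq R] (h4 : IsUnit (4 : R))
    (h27 : IsUnit (27 : R)) (T : Finset R) (hT : ∀ s ∈ T, ¬IsUnit s)
    (hTu : ∀ (u : Rˣ) (s : R), ↑u * s ∈ T ↔ s ∈ T) :
    #{xy : R × R | IsUnit xy.1 ∧ IsUnit xy.2 ∧ 4 * xy.1 ^ 3 + 27 * xy.2 ^ 2 ∈ T} =
      Fintype.card Rˣ * #T := by
  have hcubic : ∀ x t : R, 4 * x ^ 3 + 27 * (t * x) ^ 2 = x ^ 2 * (4 * x + 27 * t ^ 2) :=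
    fun x t => by ring
  set x : Rˣ × R → R := fun ts => ↑h4.unit⁻¹ * (ts.2 - 27 * ts.1 ^ 2) with hx
  have h4x : ∀ t s, 4 * x (t, s) + 27 * (t : R) ^ 2 = s := fun t s => by
    rw [hx, ← mul_assoc, h4.mul_val_inv, one_mul, sub_add_cancel]
  have hxu : ∀ t s, s ∈ T → IsUnit (x (t, s)) := fun t s hs =>
    h4.unit⁻¹.isUnit.mul (isUnit_sub_of_not_isUnit (hT s hs) (h27.mul (t.isUnit.pow 2)))
  rw [← card_univ, ← card_product, eq_comm]
  refine card_bij (fun ts _ => (x ts, ts.1 * x ts)) ?_ ?_ ?_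
  · rintro ⟨t, s⟩ hts
    have hs := (mem_product.1 hts).2
    have hxs := hxu t s hs
    refine mem_filter.2 ⟨mem_univ _, hxs, t.isUnit.mul hxs, ?_⟩
    rw [hcubic, h4x t s]
    exact (hTu (hxs.unit ^ 2) s).2 hs
  · rintro ⟨t, s⟩ hts ⟨t', s'⟩ - h
    obtain ⟨hxx, htx⟩ := Prod.mk.inj h
    have htt : t = t' :=
      Units.ext ((hxu t s (mem_product.1 hts).2).mul_right_cancel (hxx ▸ htx))
    subst htt
    refine Prod.ext rfl ?_
    calc s = 4 * x (t, s) + 27 * (t : R) ^ 2 := (h4x t s).symm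
      _ = s' := by rw [hxx, h4x t s']
  · rintro ⟨a, b⟩ hab
    obtain ⟨-, ha, hb, hD⟩ := mem_filter.1 hab
    set t := hb.unit * ha.unit⁻¹ with ht
    have hta : (t : R) * a = b := by
      rw [ht, Units.val_mul, mul_assoc, ha.val_inv_mul, mul_one, hb.unit_spec]
    have hs : 4 * a + 27 * (t : R) ^ 2 ∈ T := by
      rw [← hta, hcubic, ← ha.unit_spec, ← Units.val_pow_eq_pow_val, hTu] at hD
      exact hD
    have hxa : x (t, 4 * a + 27 * (t : R) ^ 2) = a := by
      show ↑h4.unit⁻¹ * (4 * a + 27 * (t : R) ^ 2 - 27 * (t : R) ^ 2) = a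
      rw [add_sub_cancel_right, ← mul_assoc, h4.val_inv_mul, one_mul]
    exact ⟨(t, 4 * a + 27 * (t : R) ^ 2), mem_product.2 ⟨mem_univ _, hs⟩, by rw [hxa, hta]⟩

end LocalRing

theorem isLocalRing_zmod_prime_pow {p : ℕ} (hp : p.Prime) (k : ℕ) :
    IsLocalRing (ZMod (p ^ (k + 1))) := by
  have : Fact (1 < p ^ (k + 1)) := ⟨Nat.one_lt_pow k.succ_ne_zero hp.one_lt⟩
  have hnonunit : ∀ n : ℕ, (n : ZMod (p ^ (k + 1))) ∈ nonunits _ ↔ p ∣ n := fun n => by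
    rw [mem_nonunits_iff, ZMod.isUnit_natCast_iff_not_dvd_pow hp k.succ_pos, not_not]
  refine IsLocalRing.of_nonunits_add fun a b ha hb => ?_
  rw [← ZMod.natCast_zmod_val a, hnonunit] at ha
  rw [← ZMod.natCast_zmod_val b, hnonunit] at hb
  rw [← ZMod.natCast_zmod_val a, ← ZMod.natCast_zmod_val b, ← Nat.cast_add, hnonunit]
  exact dvd_add ha hb

section Torsion

variable {p : ℕ} [Fact p.Prime] {m : ℕ}

def nonzeroPTorsion (p m : ℕ) [NeZero p] : Finset (ZMod (p ^ (m + 1))) :=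
  {s | s ≠ 0 ∧ (p : ZMod (p ^ (m + 1))) * s = 0}

theorem natCast_mem_nonzeroPTorsion_iff (n : ℕ) :
    (n : ZMod (p ^ (m + 1))) ∈ nonzeroPTorsion p m ↔ p ^ m ∣ n ∧ ¬p ^ (m + 1) ∣ n := by
  simp only [nonzeroPTorsion, mem_filter, mem_univ, true_and, ne_eq, ← Nat.cast_mul,
    ZMod.natCast_eq_zero_iff, pow_succ', Nat.mul_dvd_mul_iff_left (Fact.out : p.Prime).pos]
  exact and_comm

theorem card_nonzeroPTorsion : #(nonzeroPTorsion p m) = p - 1 := by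
  have hp : p.Prime := Fact.out
  have hq : 0 < p ^ m := pow_pos hp.pos m
  have hN : p ^ (m + 1) = p * p ^ m := pow_succ' p m
  calc #(nonzeroPTorsion p m)
    _ = #{k ∈ range (p ^ (m + 1) - 1).succ | k ≠ 0 ∧ p ^ m ∣ k} := by
        rw [Nat.succ_eq_add_one, Nat.sub_one_add_one (pow_pos hp.pos _).ne']
        refine card_bij (fun s _ => s.val) (fun s hs => ?_)
          (fun a _ b _ h => ZMod.val_injective _ h) (fun k hk => ?_)
        · rw [← ZMod.natCast_zmod_val s, natCast_mem_nonzeroPTorsion_iff] at hs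
          exact mem_filter.2
            ⟨mem_range.2 (ZMod.val_lt s), fun h0 => hs.2 (h0 ▸ dvd_zero _), hs.1⟩
        · obtain ⟨hkN, hk0, hdvd⟩ := mem_filter.1 hk
          rw [mem_range] at hkN
          refine ⟨k, ?_, ZMod.val_cast_of_lt hkN⟩
          exact (natCast_mem_nonzeroPTorsion_iff k).2
            ⟨hdvd, fun h => hk0 (Nat.eq_zero_of_dvd_of_lt h hkN)⟩
    _ = (p ^ (m + 1) - 1) / p ^ m := Nat.card_multiples' _ _
    _ = p - 1 := by
        refine Nat.div_eq_of_lt_le ?_ ?_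
        · rw [Nat.sub_one_mul, hN]; exact Nat.sub_le_sub_left hq _
        · rw [Nat.sub_one_add_one hp.ne_zero, hN]
          exact Nat.sub_lt (Nat.mul_pos hp.pos hq) one_pos

theorem not_isUnit_of_mem_nonzeroPTorsion (hm : 1 ≤ m) {s : ZMod (p ^ (m + 1))}
    (hs : s ∈ nonzeroPTorsion p m) : ¬IsUnit s := by
  intro hu
  have hp0 : ((p : ℕ) : ZMod (p ^ (m + 1))) = 0 := hu.mul_left_eq_zero.1 (mem_filter.1 hs).2.2
  rw [ZMod.natCast_eq_zero_iff] at hp0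
  have := (Nat.pow_dvd_pow_iff_le_right (k := m + 1) (l := 1) (Fact.out : p.Prime).one_lt).1
    (by rwa [pow_one])
  omega

theorem units_mul_mem_nonzeroPTorsion_iff (u : (ZMod (p ^ (m + 1)))ˣ) (s : ZMod (p ^ (m + 1))) :
    ↑u * s ∈ nonzeroPTorsion p m ↔ s ∈ nonzeroPTorsion p m := by
  simp only [nonzeroPTorsion, mem_filter, mem_univ, true_and, ne_eq, Units.mul_right_eq_zero,
    mul_left_comm (p : ZMod (p ^ (m + 1)))]

end Torsion

section Residues

variable {p : ℕ} [Fact p.Prime] {m : ℕ}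

-- The pairs `(A / p ^ 2, B / p ^ 3)` mod `p ^ (m + 1)` for which `y² = x³ + A x + B` has
-- Kodaira type `I_m*` at `p`.
open scoped Classical in
def iStarResidues (p m : ℕ) [NeZero p] : Finset (ZMod (p ^ (m + 1)) × ZMod (p ^ (m + 1))) :=
  {xy | IsUnit xy.1 ∧ IsUnit xy.2 ∧ 4 * xy.1 ^ 3 + 27 * xy.2 ^ 2 ∈ nonzeroPTorsion p m}

theorem card_iStarResidues (h5 : 5 ≤ p) (hm : 1 ≤ m) :
    #(iStarResidues p m) = p ^ m * (p - 1) * (p - 1) := by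
  have hp : p.Prime := Fact.out
  have := isLocalRing_zmod_prime_pow hp m
  have hunit : ∀ n : ℕ, ¬p ∣ n → IsUnit (n : ZMod (p ^ (m + 1))) :=
    fun n => (ZMod.isUnit_natCast_iff_not_dvd_pow hp m.succ_pos).2
  have h4 : ¬p ∣ 4 := fun h => by have := Nat.le_of_dvd (by norm_num) h; omega
  have h27 : ¬p ∣ 3 ^ 3 := fun h => by
    have := Nat.le_of_dvd (by norm_num) (hp.dvd_of_dvd_pow h); omega
  rw [iStarResidues, card_filter_isUnit_cubic_mem (by exact_mod_cast hunit 4 h4)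
    (by exact_mod_cast hunit _ h27) _ (fun s => not_isUnit_of_mem_nonzeroPTorsion hm)
    units_mul_mem_nonzeroPTorsion_iff, ZMod.card_units_eq_totient,
    Nat.totient_prime_pow hp m.succ_pos, card_nonzeroPTorsion, Nat.succ_sub_one]

theorem not_pow_succ_dvd_pow_mul_iff_isUnit (k a : ℕ) :
    ¬(p : ℤ) ^ (k + 1) ∣ p ^ k * a ↔ IsUnit (a : ZMod (p ^ (m + 1))) := by
  have hp : p.Prime := Fact.out
  rw [pow_succ, mul_dvd_mul_iff_left (pow_ne_zero k (by exact_mod_cast hp.ne_zero)),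
    Int.natCast_dvd_natCast, ZMod.isUnit_natCast_iff_not_dvd_pow hp m.succ_pos]

theorem setOf_eq_image :
    {AB : ℤ × ℤ | 0 ≤ AB.1 ∧ AB.1 < (p : ℤ) ^ (m + 6) ∧ 0 ≤ AB.2 ∧ AB.2 < (p : ℤ) ^ (m + 6) ∧
        ((p : ℤ) ^ 2 ∣ AB.1 ∧ ¬ (p : ℤ) ^ 3 ∣ AB.1) ∧
        ((p : ℤ) ^ 3 ∣ AB.2 ∧ ¬ (p : ℤ) ^ 4 ∣ AB.2) ∧
        (p : ℤ) ^ m ∣ (4 * (AB.1 / (p : ℤ) ^ 2) ^ 3 + 27 * (AB.2 / (p : ℤ) ^ 3) ^ 2) ∧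
        ¬ (p : ℤ) ^ (m + 1) ∣ (4 * (AB.1 / (p : ℤ) ^ 2) ^ 3 + 27 * (AB.2 / (p : ℤ) ^ 3) ^ 2)} =
      (fun ab : ℕ × ℕ => ((p : ℤ) ^ 2 * ab.1, (p : ℤ) ^ 3 * ab.2)) ''
        ↑{ab ∈ range (p ^ 3 * p ^ (m + 1)) ×ˢ range (p ^ 2 * p ^ (m + 1)) |
          ((ab.1 : ZMod (p ^ (m + 1))), (ab.2 : ZMod (p ^ (m + 1)))) ∈ iStarResidues p m} := by
  have hp : p.Prime := Fact.out
  have hp0 : (0 : ℤ) < p := by exact_mod_cast hp.pos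
  have hlt : ∀ k n a : ℕ, k + n = 5 →
      ((p : ℤ) ^ k * a < p ^ (m + 6) ↔ a < p ^ n * p ^ (m + 1)) := by
    intro k n a hkn
    rw [show (p : ℤ) ^ (m + 6) = p ^ k * ((p ^ n * p ^ (m + 1) : ℕ) : ℤ) by
      push_cast; rw [← pow_add, ← pow_add]; congr 1; omega]
    rw [mul_lt_mul_iff_right₀ (pow_pos hp0 k), Nat.cast_lt]
  have hunit := not_pow_succ_dvd_pow_mul_iff_isUnit (p := p) (m := m)
  have hdiv : ∀ k (a : ℤ), (p : ℤ) ^ k * a / p ^ k = a :=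
    fun k a => Int.mul_ediv_cancel_left a (pow_ne_zero k hp0.ne')
  have hdisc : ∀ a b : ℕ, ((p : ℤ) ^ m ∣ 4 * (a : ℤ) ^ 3 + 27 * (b : ℤ) ^ 2 ∧
      ¬(p : ℤ) ^ (m + 1) ∣ 4 * (a : ℤ) ^ 3 + 27 * (b : ℤ) ^ 2) ↔
      4 * (a : ZMod (p ^ (m + 1))) ^ 3 + 27 * (b : ZMod (p ^ (m + 1))) ^ 2 ∈
        nonzeroPTorsion p m := by
    intro a b
    have := natCast_mem_nonzeroPTorsion_iff (p := p) (m := m) (4 * a ^ 3 + 27 * b ^ 2)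
    push_cast at this
    rw [this, ← Int.natCast_dvd_natCast, ← Int.natCast_dvd_natCast]
    push_cast
    rfl
  ext ⟨A, B⟩
  simp only [Set.mem_ofPred_eq, Set.mem_image, mem_coe, mem_filter, mem_product, mem_range,
    Prod.mk.injEq, Prod.exists, iStarResidues, mem_univ, true_and]
  constructor
  · rintro ⟨hA0, hA, hB0, hB, ⟨⟨a, rfl⟩, hA3⟩, ⟨⟨b, rfl⟩, hB4⟩, hD⟩
    lift a to ℕ using nonneg_of_mul_nonneg_right hA0 (pow_pos hp0 2)
    lift b to ℕ using nonneg_of_mul_nonneg_right hB0 (pow_pos hp0 3)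
    rw [hlt 2 3 a rfl] at hA
    rw [hlt 3 2 b rfl] at hB
    rw [hdiv, hdiv, hdisc] at hD
    exact ⟨a, b, ⟨⟨hA, hB⟩, (hunit 2 a).1 hA3, (hunit 3 b).1 hB4, hD⟩, rfl, rfl⟩
  · rintro ⟨a, b, ⟨⟨hA, hB⟩, ha, hb, hD⟩, rfl, rfl⟩
    rw [← hlt 2 3 a rfl] at hA
    rw [← hlt 3 2 b rfl] at hB
    rw [hdiv, hdiv, hdisc]
    exact ⟨by positivity, hA, by positivity, hB, ⟨dvd_mul_right _ _, (hunit 2 a).2 ha⟩,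
      ⟨dvd_mul_right _ _, (hunit 3 b).2 hb⟩, hD⟩

end Residues

end IStarCount

theorem stmt_7 (p : ℕ) (hp : p.Prime) (h5 : 5 ≤ p) (m : ℕ) (hm : 1 ≤ m) :
    {AB : ℤ × ℤ | 0 ≤ AB.1 ∧ AB.1 < (p : ℤ) ^ (m + 6) ∧ 0 ≤ AB.2 ∧ AB.2 < (p : ℤ) ^ (m + 6) ∧
        ((p : ℤ) ^ 2 ∣ AB.1 ∧ ¬ (p : ℤ) ^ 3 ∣ AB.1) ∧
        ((p : ℤ) ^ 3 ∣ AB.2 ∧ ¬ (p : ℤ) ^ 4 ∣ AB.2) ∧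
        (p : ℤ) ^ m ∣ (4 * (AB.1 / (p : ℤ) ^ 2) ^ 3 + 27 * (AB.2 / (p : ℤ) ^ 3) ^ 2) ∧
        ¬ (p : ℤ) ^ (m + 1) ∣ (4 * (AB.1 / (p : ℤ) ^ 2) ^ 3 + 27 * (AB.2 / (p : ℤ) ^ 3) ^ 2)}.ncard
      = p ^ (m + 5) * (p - 1) ^ 2 := by
  have : Fact p.Prime := ⟨hp⟩
  have hp0 : (p : ℤ) ≠ 0 := by exact_mod_cast hp.ne_zero
  have hscale : Function.Injective fun ab : ℕ × ℕ => ((p : ℤ) ^ 2 * ab.1, (p : ℤ) ^ 3 * ab.2) := by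
    intro ab ab' h
    obtain ⟨h1, h2⟩ := Prod.mk.inj h
    exact Prod.ext (by exact_mod_cast mul_left_cancel₀ (pow_ne_zero 2 hp0) h1)
      (by exact_mod_cast mul_left_cancel₀ (pow_ne_zero 3 hp0) h2)
  rw [IStarCount.setOf_eq_image, Set.ncard_image_of_injective _ hscale, Set.ncard_coe_finset,
    IStarCount.card_filter_product_natCast_mem, IStarCount.card_iStarResidues h5 hm]
  ring
end

section
/- Let p ≥ 5 be a prime. The number of pairs of integers (A,B) with 0 ≤ A < p⁶, 0 ≤ B < p⁶, such that p² ∣ A, p³ ∣ B, and p ∤ 4(A/p²)³ + 27(B/p³)², equals p⁶(p−1). (This condition depends only on (A,B) modulo p⁶, and characterizes Kodaira–Néron type I_0* at p for the minimal model y² = x³+Ax+B.) -/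
lemma card_cusp (p : ℕ) [Fact p.Prime] (h5 : 5 ≤ p) :
    (Finset.univ.filter (fun xy : ZMod p × ZMod p =>
      4 * xy.1 ^ 3 + 27 * xy.2 ^ 2 = 0)).card = p := by
  have h2 : (2 : ZMod p) ≠ 0 := by
    have : ¬ (p ∣ 2) := fun h => by have := Nat.le_of_dvd (by norm_num) h; omega
    simpa [show ((2:ℕ) : ZMod p) = 2 by norm_cast] using
      (ZMod.natCast_eq_zero_iff 2 p).not.mpr this
  have h3 : (3 : ZMod p) ≠ 0 := by
    have : ¬ (p ∣ 3) := fun h => by have := Nat.le_of_dvd (by norm_num) h; omega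
    simpa [show ((3:ℕ) : ZMod p) = 3 by norm_cast] using
      (ZMod.natCast_eq_zero_iff 3 p).not.mpr this
  conv_rhs => rw [← ZMod.card p, ← Finset.card_univ]
  refine Finset.card_bij' (fun xy _ => (-3) * xy.2 / (2 * xy.1))
    (fun t _ => (-3 * t ^ 2, 2 * t ^ 3)) ?hi ?hj ?li ?ri
  case hi => intro xy hxy; exact Finset.mem_univ _
  case hj =>
    intro t _
    simp only [Finset.mem_filter, Finset.mem_univ, true_and]
    ring
  case li =>
    intro xy hxy
    simp only [Finset.mem_filter, Finset.mem_univ, true_and] at hxy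
    rcases eq_or_ne xy.1 0 with hx | hx
    · have hy : xy.2 = 0 := by
        have h27 : (27 : ZMod p) ≠ 0 := by
          have : (27 : ZMod p) = 3 ^ 3 := by norm_num
          rw [this]; exact pow_ne_zero _ h3
        have hz : 27 * xy.2 ^ 2 = 0 := by rw [hx] at hxy; linear_combination hxy
        rcases mul_eq_zero.mp hz with h | h
        · exact absurd h h27
        · exact pow_eq_zero_iff (by norm_num) |>.mp h
      ext
      · simp [hx, hy]
      · simp [hx, hy]
    · have hx2 : (2 * xy.1) ^ 2 ≠ 0 := pow_ne_zero _ (mul_ne_zero h2 hx)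
      have t2 : ((-3) * xy.2 / (2 * xy.1)) ^ 2 = -xy.1 / 3 := by
        rw [div_pow, div_eq_div_iff hx2 h3]
        linear_combination hxy
      ext
      · show -3 * ((-3) * xy.2 / (2 * xy.1)) ^ 2 = xy.1
        rw [t2]; field_simp
      · show 2 * ((-3) * xy.2 / (2 * xy.1)) ^ 3 = xy.2
        have hsplit : ((-3) * xy.2 / (2 * xy.1)) ^ 3
            = ((-3) * xy.2 / (2 * xy.1)) ^ 2 * ((-3) * xy.2 / (2 * xy.1)) := by ring
        rw [hsplit, t2]
        rw [div_mul_div_comm, ← mul_div_assoc,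
          div_eq_iff (mul_ne_zero h3 (mul_ne_zero h2 hx))]
        ring
  case ri =>
    intro t _
    show (-3) * (2 * t ^ 3) / (2 * (-3 * t ^ 2)) = t
    rcases eq_or_ne t 0 with h | h
    · simp [h]
    · rw [div_eq_iff (by
        apply mul_ne_zero h2
        apply mul_ne_zero (neg_ne_zero.mpr h3)
        exact pow_ne_zero _ h)]
      ring

lemma fiber_card (p : ℕ) [NeZero p] (M : ℕ) (x : ZMod p) :
    ((Finset.Ico (0:ℤ) ((M:ℤ) * p)).filter
      (fun a : ℤ => ((a : ZMod p) = x))).card = M := by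
  have hp : 0 < (p:ℤ) := by exact_mod_cast Nat.pos_of_ne_zero (NeZero.ne p)
  have hvalx : ((x.val : ℕ) : ZMod p) = x := by rw [ZMod.natCast_val, ZMod.cast_id]
  have hvlt : (x.val : ℤ) < p := by exact_mod_cast ZMod.val_lt x
  have hvnn : (0:ℤ) ≤ x.val := Int.natCast_nonneg _
  have hcard : (Finset.Ico (0:ℤ) (M:ℤ)).card = M := by simp
  conv_rhs => rw [← hcard]
  have key : ∀ a : ℤ, a ∈ (Finset.Ico (0:ℤ) ((M:ℤ) * p)).filter
      (fun a : ℤ => ((a : ZMod p) = x)) → (p:ℤ) ∣ (a - x.val) := by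
    intro a ha
    simp only [Finset.mem_filter, Finset.mem_Ico] at ha
    have h0 : ((a - x.val : ℤ) : ZMod p) = 0 := by
      push_cast
      rw [ha.2, hvalx, sub_self]
    exact (ZMod.intCast_zmod_eq_zero_iff_dvd _ p).mp h0
  refine Finset.card_bij' (fun a _ => (a - (x.val:ℤ)) / p)
    (fun j _ => (x.val : ℤ) + p * j) ?hi ?hj ?li ?ri
  case hi =>
    intro a ha
    show (a - (x.val:ℤ)) / p ∈ Finset.Ico (0:ℤ) (M:ℤ)
    obtain ⟨k, hk⟩ := key a ha
    simp only [Finset.mem_filter, Finset.mem_Ico] at ha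
    rw [hk, Int.mul_ediv_cancel_left _ hp.ne']
    simp only [Finset.mem_Ico]
    constructor
    · have h1 : (p:ℤ) * (-1) < p * k := by rw [← hk]; linarith [ha.1.1]
      have := lt_of_mul_lt_mul_left h1 (le_of_lt hp)
      omega
    · have h1 : (p:ℤ) * k < p * M := by
        rw [← hk]
        have h2 := ha.1.2
        nlinarith
      exact lt_of_mul_lt_mul_left h1 (le_of_lt hp)
  case hj =>
    intro j hj
    simp only [Finset.mem_Ico] at hj
    show (x.val:ℤ) + p * j ∈ Finset.filter _ _
    simp only [Finset.mem_filter, Finset.mem_Ico]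
    refine ⟨⟨by nlinarith [hj.1, hvnn, hp.le], ?_⟩, ?_⟩
    · nlinarith [mul_le_mul_of_nonneg_left (show j + 1 ≤ (M:ℤ) from by omega) hp.le]
    · push_cast
      simp [hvalx, ZMod.natCast_self]
  case li =>
    intro a ha
    have h1 := Int.ediv_mul_cancel (key a ha)
    have h2 := Int.mul_ediv_cancel' (key a ha)
    show (x.val : ℤ) + p * ((a - (x.val:ℤ)) / p) = a
    linarith
  case ri =>
    intro j hj
    show ((x.val:ℤ) + p * j - (x.val:ℤ)) / p = j
    rw [add_sub_cancel_left, Int.mul_ediv_cancel_left _ hp.ne']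

theorem stmt_8 (p : ℕ) (hp : p.Prime) (h5 : 5 ≤ p) :
    {AB : ℤ × ℤ | 0 ≤ AB.1 ∧ AB.1 < (p : ℤ) ^ 6 ∧ 0 ≤ AB.2 ∧ AB.2 < (p : ℤ) ^ 6 ∧
        (p : ℤ) ^ 2 ∣ AB.1 ∧ (p : ℤ) ^ 3 ∣ AB.2 ∧
        ¬ (p : ℤ) ∣ (4 * (AB.1 / (p : ℤ) ^ 2) ^ 3 + 27 * (AB.2 / (p : ℤ) ^ 3) ^ 2)}.ncard
      = p ^ 6 * (p - 1) := by
  classical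
  haveI : Fact p.Prime := ⟨hp⟩
  have hp0 : (0:ℤ) < (p:ℤ) := by exact_mod_cast hp.pos
  set F0 : Finset (ℤ × ℤ) :=
    (Finset.Ico (0:ℤ) ((p:ℤ)^4) ×ˢ Finset.Ico (0:ℤ) ((p:ℤ)^3)).filter
      (fun ab : ℤ × ℤ => ¬ (p:ℤ) ∣ (4 * ab.1 ^ 3 + 27 * ab.2 ^ 2)) with hF0
  have finj : Function.Injective
      (fun ab : ℤ × ℤ => ((p:ℤ)^2 * ab.1, (p:ℤ)^3 * ab.2)) := by
    intro x y h
    simp only [Prod.mk.injEq] at h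
    have h1 := mul_left_cancel₀ (by positivity : ((p:ℤ)^2) ≠ 0) h.1
    have h2 := mul_left_cancel₀ (by positivity : ((p:ℤ)^3) ≠ 0) h.2
    exact Prod.ext h1 h2
  have hSet : {AB : ℤ × ℤ | 0 ≤ AB.1 ∧ AB.1 < (p : ℤ) ^ 6 ∧ 0 ≤ AB.2 ∧ AB.2 < (p : ℤ) ^ 6 ∧
        (p : ℤ) ^ 2 ∣ AB.1 ∧ (p : ℤ) ^ 3 ∣ AB.2 ∧
        ¬ (p : ℤ) ∣ (4 * (AB.1 / (p : ℤ) ^ 2) ^ 3 + 27 * (AB.2 / (p : ℤ) ^ 3) ^ 2)}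
      = ↑(F0.image (fun ab : ℤ × ℤ => ((p:ℤ)^2 * ab.1, (p:ℤ)^3 * ab.2))) := by
    ext AB
    simp only [Set.mem_setOf_eq, Finset.coe_image, Set.mem_image, Finset.mem_coe, hF0,
      Finset.mem_filter, Finset.mem_product, Finset.mem_Ico]
    constructor
    · rintro ⟨h1, h2, h3, h4, hA, hB, hnd⟩
      refine ⟨(AB.1 / (p:ℤ)^2, AB.2 / (p:ℤ)^3), ⟨⟨⟨?_, ?_⟩, ?_, ?_⟩, hnd⟩, ?_⟩
      · exact Int.ediv_nonneg h1 (by positivity)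
      · have hc := Int.ediv_mul_cancel hA
        have : (AB.1 / (p:ℤ)^2) * (p:ℤ)^2 < (p:ℤ)^4 * (p:ℤ)^2 := by
          rw [hc]; calc AB.1 < (p:ℤ)^6 := h2
          _ = (p:ℤ)^4 * (p:ℤ)^2 := by ring
        exact lt_of_mul_lt_mul_right this (by positivity)
      · exact Int.ediv_nonneg h3 (by positivity)
      · have hc := Int.ediv_mul_cancel hB
        have : (AB.2 / (p:ℤ)^3) * (p:ℤ)^3 < (p:ℤ)^3 * (p:ℤ)^3 := by
          rw [hc]; calc AB.2 < (p:ℤ)^6 := h4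
          _ = (p:ℤ)^3 * (p:ℤ)^3 := by ring
        exact lt_of_mul_lt_mul_right this (by positivity)
      · have hc1 := Int.mul_ediv_cancel' hA
        have hc2 := Int.mul_ediv_cancel' hB
        exact Prod.ext hc1 hc2
    · rintro ⟨⟨a, b⟩, ⟨⟨⟨ha0, ha1⟩, hb0, hb1⟩, hP⟩, rfl⟩
      have e1 : ((p:ℤ)^2 * a) / (p:ℤ)^2 = a :=
        Int.mul_ediv_cancel_left _ (by positivity)
      have e2 : ((p:ℤ)^3 * b) / (p:ℤ)^3 = b :=
        Int.mul_ediv_cancel_left _ (by positivity)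
      refine ⟨by positivity, ?_, by positivity, ?_, ⟨a, rfl⟩, ⟨b, rfl⟩, ?_⟩
      · calc (p:ℤ)^2 * a < (p:ℤ)^2 * (p:ℤ)^4 :=
            mul_lt_mul_of_pos_left ha1 (by positivity)
          _ = (p:ℤ)^6 := by ring
      · calc (p:ℤ)^3 * b < (p:ℤ)^3 * (p:ℤ)^3 :=
            mul_lt_mul_of_pos_left hb1 (by positivity)
          _ = (p:ℤ)^6 := by ring
      · simpa [e1, e2] using hP
  rw [hSet, Set.ncard_coe_finset, Finset.card_image_of_injective _ finj]
  -- now count F0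
  have hpred : ∀ ab : ℤ × ℤ,
      (¬ (p:ℤ) ∣ (4 * ab.1 ^ 3 + 27 * ab.2 ^ 2))
      ↔ ¬ (4 * ((ab.1 : ZMod p)) ^ 3 + 27 * ((ab.2 : ZMod p)) ^ 2 = 0) := by
    intro ab
    rw [← ZMod.intCast_zmod_eq_zero_iff_dvd]
    push_cast
    tauto
  have hF0' : F0 = (Finset.Ico (0:ℤ) ((p:ℤ)^4) ×ˢ Finset.Ico (0:ℤ) ((p:ℤ)^3)).filter
      (fun ab : ℤ × ℤ =>
        ¬ (4 * ((ab.1 : ZMod p)) ^ 3 + 27 * ((ab.2 : ZMod p)) ^ 2 = 0)) := by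
    rw [hF0]
    apply Finset.filter_congr
    intro ab _
    simpa using hpred ab
  rw [hF0']
  set T : Finset (ZMod p × ZMod p) := Finset.univ.filter
    (fun xy : ZMod p × ZMod p => ¬ (4 * xy.1 ^ 3 + 27 * xy.2 ^ 2 = 0)) with hT
  have hmaps : ∀ ab ∈ (Finset.Ico (0:ℤ) ((p:ℤ)^4) ×ˢ Finset.Ico (0:ℤ) ((p:ℤ)^3)).filter
      (fun ab : ℤ × ℤ =>
        ¬ (4 * ((ab.1 : ZMod p)) ^ 3 + 27 * ((ab.2 : ZMod p)) ^ 2 = 0)),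
      (((ab.1 : ZMod p)), ((ab.2 : ZMod p))) ∈ T := by
    intro ab hab
    simp only [Finset.mem_filter] at hab
    simp only [hT, Finset.mem_filter, Finset.mem_univ, true_and]
    exact hab.2
  rw [Finset.card_eq_sum_card_fiberwise hmaps]
  have hfiber : ∀ b ∈ T,
      (((Finset.Ico (0:ℤ) ((p:ℤ)^4) ×ˢ Finset.Ico (0:ℤ) ((p:ℤ)^3)).filter
        (fun ab : ℤ × ℤ =>
          ¬ (4 * ((ab.1 : ZMod p)) ^ 3 + 27 * ((ab.2 : ZMod p)) ^ 2 = 0))).filter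
        (fun ab => (((ab.1 : ZMod p)), ((ab.2 : ZMod p))) = b)).card
      = p ^ 3 * p ^ 2 := by
    intro b hb
    simp only [hT, Finset.mem_filter, Finset.mem_univ, true_and] at hb
    rw [Finset.filter_filter]
    have hcongr : ((Finset.Ico (0:ℤ) ((p:ℤ)^4) ×ˢ Finset.Ico (0:ℤ) ((p:ℤ)^3)).filter
        (fun ab : ℤ × ℤ =>
          (¬ (4 * ((ab.1 : ZMod p)) ^ 3 + 27 * ((ab.2 : ZMod p)) ^ 2 = 0)) ∧
          (((ab.1 : ZMod p)), ((ab.2 : ZMod p))) = b))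
        = ((Finset.Ico (0:ℤ) ((p:ℤ)^4) ×ˢ Finset.Ico (0:ℤ) ((p:ℤ)^3)).filter
        (fun ab : ℤ × ℤ => ((ab.1 : ZMod p) = b.1) ∧ ((ab.2 : ZMod p) = b.2))) := by
      apply Finset.filter_congr
      intro ab _
      simp only [Prod.ext_iff]
      constructor
      · rintro ⟨_, h⟩; exact h
      · rintro ⟨h1, h2⟩
        refine ⟨?_, h1, h2⟩
        rw [h1, h2]; exact hb
    have hprod := Finset.filter_product (s := Finset.Ico (0:ℤ) ((p:ℤ)^4))
      (t := Finset.Ico (0:ℤ) ((p:ℤ)^3))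
      (fun a : ℤ => ((a : ZMod p) = b.1)) (fun a : ℤ => ((a : ZMod p) = b.2))
    rw [hcongr, hprod, Finset.card_product]
    have e4 : ((p:ℤ)^4) = ((p^3 : ℕ) : ℤ) * p := by push_cast; ring
    have e3 : ((p:ℤ)^3) = ((p^2 : ℕ) : ℤ) * p := by push_cast; ring
    rw [e4, e3, fiber_card p (p^3) b.1, fiber_card p (p^2) b.2]
  rw [Finset.sum_congr rfl hfiber, Finset.sum_const, smul_eq_mul]
  have hTcard : T.card = p ^ 2 - p := by
    have hsplit : (Finset.univ.filter (fun xy : ZMod p × ZMod p =>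
        4 * xy.1 ^ 3 + 27 * xy.2 ^ 2 = 0)).card + T.card
        = (Finset.univ : Finset (ZMod p × ZMod p)).card := by
      rw [hT]
      exact Finset.card_filter_add_card_filter_not _
    have hcusp := card_cusp p h5
    have huniv : (Finset.univ : Finset (ZMod p × ZMod p)).card = p ^ 2 := by
      simp [ZMod.card, sq]
    omega
  rw [hTcard]
  have hple : p ≤ p ^ 2 := by nlinarith
  have h1 : (p ^ 2 - p) * (p ^ 3 * p ^ 2) = p ^ 7 - p ^ 6 := by
    rw [Nat.sub_mul]
    congr 1 <;> ring
  have h2 : p ^ 6 * (p - 1) = p ^ 7 - p ^ 6 := by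
    rw [Nat.mul_sub]
    congr 1 <;> ring
  rw [h1, h2]
end
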